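/- Suppose q1 and q0 are mutually absolutely continuous, and let r* := dq1/dq0 (so r* > 0 q0-a.e.). Fix an integer K ≥ 1 and a real ν > 0, let Ψ : (0,∞)^K → ℝ be differentiable, and let λ^Ψ be the Ψ-induced scoring rule on the interior of the probability simplex in ℝ^{K+1} (classes z = 0, 1, …, K). For a measurable r : X → (0,∞), define the scoring-rule loss L^Ψ_{K;ν}(r) := (ν/(K+ν)) · E_{q0^{⊗K}}[ λ^Ψ_0(η_r(x_{1:K})) ] + (1/(K+ν)) · ∑_{z=1}^K E_{p_z}[ λ^Ψ_z(η_r(x_{1:K})) ]. Then, provided all these expectations (for r and for r*) are finite, L^Ψ_{K;ν}(r) − L^Ψ_{K;ν}(r*) = (ν/(K+ν)) · E_{q0^{⊗K}}[ B_Ψ( (r*(x_1)/ν, …, r*(x_K)/ν), (r(x_1)/ν, …, r(x_K)/ν) ) ]. -/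
import Mathlib


open MeasureTheory
open scoped ENNReal BigOperators

/-- The class measure on `X^K` under which the `z`-th coordinate has law `q1` and the
remaining coordinates are i.i.d. with law `q0`, all independent. -/
noncomputable def classMeasure {X : Type*} [MeasurableSpace X]
    (q1 q0 : Measure X) (K : ℕ) (z : Fin K) : Measure (Fin K → X) :=
  Measure.pi fun i => if i = z then q1 else q0

/-- `ρ(η) = (η_1/η_0, …, η_K/η_0)`. -/
noncomputable def rhoOf (K : ℕ) (η : Fin (K + 1) → ℝ) : Fin K → ℝ :=
  fun z => η z.succ / η 0

/-- The `Ψ`-induced scoring rule: `λ^Ψ_0(η) = ⟨ρ, ∇Ψ(ρ)⟩ − Ψ(ρ)` and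
`λ^Ψ_z(η) = −(∇Ψ(ρ))_z` for `z = 1, …, K`, where `ρ = ρ(η)`. -/
noncomputable def inducedRule (K : ℕ) (Ψ : (Fin K → ℝ) → ℝ)
    (η : Fin (K + 1) → ℝ) : Fin (K + 1) → ℝ :=
  Fin.cons
    ((∑ z, rhoOf K η z * fderiv ℝ Ψ (rhoOf K η) (Pi.single z 1)) - Ψ (rhoOf K η))
    (fun z => - fderiv ℝ Ψ (rhoOf K η) (Pi.single z 1))

/-- Bregman distortion `B_F(u, v) = F(u) − F(v) − ⟨∇F(v), u − v⟩`. -/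
noncomputable def bregman {n : ℕ} (F : (Fin n → ℝ) → ℝ) (u v : Fin n → ℝ) : ℝ :=
  F u - F v - fderiv ℝ F v (u - v)

/-- The class-probability vector `η_r(x_{1:K})`:
`(η_r)_0 = ν/(ν + ∑_i r(x_i))` and `(η_r)_z = r(x_z)/(ν + ∑_i r(x_i))`. -/
noncomputable def etaR {X : Type*} {K : ℕ} (ν : ℝ) (r : X → ℝ) (x : Fin K → X) :
    Fin (K + 1) → ℝ :=
  fun i => Fin.cons (α := fun _ => ℝ) ν (fun z => r (x z)) i / (ν + ∑ z, r (x z))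

/-- The scoring-rule loss
`L^Ψ_{K;ν}(r) = (ν/(K+ν)) E_{q0^{⊗K}}[λ^Ψ_0(η_r)] + (1/(K+ν)) ∑_z E_{p_z}[λ^Ψ_z(η_r)]`. -/
noncomputable def scoreLoss {X : Type*} [MeasurableSpace X]
    (q1 q0 : Measure X) (K : ℕ) (ν : ℝ) (Ψ : (Fin K → ℝ) → ℝ) (r : X → ℝ) : ℝ :=
  (ν / ((K : ℝ) + ν)) *
    ∫ x : Fin K → X, inducedRule K Ψ (etaR ν r x) 0 ∂(Measure.pi fun _ : Fin K => q0)
  + ((K : ℝ) + ν)⁻¹ *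
    ∑ z : Fin K,
      ∫ x : Fin K → X, inducedRule K Ψ (etaR ν r x) z.succ ∂(classMeasure q1 q0 K z)

theorem my_lintegral_pi {n : ℕ} {E : Type*} [MeasurableSpace E]
    (μ : Fin n → Measure E) [∀ i, SigmaFinite (μ i)]
    (f : Fin n → E → ℝ≥0∞) (hf : ∀ i, Measurable (f i)) :
    ∫⁻ x : Fin n → E, ∏ i, f i (x i) ∂Measure.pi μ = ∏ i, ∫⁻ y, f i y ∂μ i := by
  induction n with
  | zero => simp [Measure.pi_of_empty]
  | succ n ih =>
      have h := measurePreserving_piFinSuccAbove μ 0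
      have hg : Measurable (fun y : E × (Fin n → E) =>
          f 0 y.1 * ∏ j : Fin n, f j.succ (y.2 j)) := by
        exact ((hf 0).comp measurable_fst).mul
          (Finset.measurable_prod _ fun j _ =>
            (hf j.succ).comp ((measurable_pi_apply j).comp measurable_snd))
      have := h.lintegral_comp hg
      rw [Fin.prod_univ_succ]
      calc ∫⁻ x : Fin (n+1) → E, ∏ i, f i (x i) ∂Measure.pi μ
          = ∫⁻ x : Fin (n+1) → E,
              f 0 ((MeasurableEquiv.piFinSuccAbove (fun _ => E) 0 x).1) *
              ∏ j : Fin n, f j.succ ((MeasurableEquiv.piFinSuccAbove (fun _ => E) 0 x).2 j)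
              ∂Measure.pi μ := by
            refine lintegral_congr fun x => ?_
            rw [Fin.prod_univ_succ]
            simp [MeasurableEquiv.piFinSuccAbove_apply, Fin.zero_succAbove, Fin.tail]
        _ = ∫⁻ y : E × (Fin n → E), f 0 y.1 * ∏ j : Fin n, f j.succ (y.2 j)
              ∂((μ 0).prod (Measure.pi fun j => μ ((0 : Fin (n+1)).succAbove j))) := this
        _ = (∫⁻ y, f 0 y ∂μ 0) * ∫⁻ v : Fin n → E, ∏ j : Fin n, f j.succ (v j)
              ∂(Measure.pi fun j => μ ((0 : Fin (n+1)).succAbove j)) :=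
            lintegral_prod_mul (f := f 0)
              (g := fun v : Fin n → E => ∏ j : Fin n, f j.succ (v j)) ((hf 0).aemeasurable)
              ((Finset.measurable_prod _ fun j _ =>
                (hf j.succ).comp (measurable_pi_apply j)).aemeasurable)
        _ = (∫⁻ y, f 0 y ∂μ 0) * ∏ j : Fin n, ∫⁻ y, f j.succ y ∂μ j.succ := by
            congr 1
            have hμ : (fun j : Fin n => μ ((0 : Fin (n+1)).succAbove j)) = fun j => μ j.succ := by
              funext j; rw [Fin.zero_succAbove]
            rw [hμ]
            exact ih (fun j => μ j.succ) (fun j => f j.succ) (fun j => hf j.succ)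

theorem classMeasure_eq_withDensity {X : Type*} [MeasurableSpace X]
    (q1 q0 : Measure X) [IsProbabilityMeasure q1] [IsProbabilityMeasure q0]
    (h10 : q1 ≪ q0) (K : ℕ) (z : Fin K) :
    classMeasure q1 q0 K z
      = (Measure.pi fun _ : Fin K => q0).withDensity
          (fun x => q1.rnDeriv q0 (x z)) := by
  haveI : ∀ i : Fin K, SigmaFinite ((fun i => if i = z then q1 else q0) i) := by
    intro i; by_cases h : i = z <;> simp [h] <;> infer_instance
  refine Measure.pi_eq fun s hs => ?_
  rw [withDensity_apply _ (MeasurableSet.univ_pi hs)]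
  have hkey : ∀ x : Fin K → X,
      (Set.univ.pi s).indicator (fun x : Fin K → X => q1.rnDeriv q0 (x z)) x
        = ∏ i, (if i = z then (s i).indicator (q1.rnDeriv q0) else (s i).indicator 1) (x i) := by
    intro x
    by_cases hx : x ∈ Set.univ.pi s
    · rw [Set.indicator_of_mem hx]
      have hx' : ∀ i, x i ∈ s i := fun i => hx i (Set.mem_univ i)
      rw [Finset.prod_congr rfl (g := fun i => if i = z then q1.rnDeriv q0 (x z) else 1)
        (fun i _ => ?_), Finset.prod_ite_eq' Finset.univ z
          (fun _ => q1.rnDeriv q0 (x z))]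
      · simp
      · by_cases h : i = z <;>
          simp [h, Set.indicator_of_mem (hx' _), Set.indicator_of_mem (hx' z)]
    · rw [Set.indicator_of_notMem hx]
      rw [Set.mem_univ_pi] at hx
      push_neg at hx
      obtain ⟨i, hi⟩ := hx
      refine (Finset.prod_eq_zero (Finset.mem_univ i) ?_).symm
      by_cases h : i = z
      · subst h; simp [Set.indicator_of_notMem hi]
      · simp [h, Set.indicator_of_notMem hi]
  calc ∫⁻ x in Set.univ.pi s, q1.rnDeriv q0 (x z) ∂(Measure.pi fun _ : Fin K => q0)
      = ∫⁻ x, ∏ i, (if i = z then (s i).indicator (q1.rnDeriv q0)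
          else (s i).indicator 1) (x i) ∂(Measure.pi fun _ : Fin K => q0) := by
        rw [← lintegral_indicator (MeasurableSet.univ_pi hs)]
        exact lintegral_congr hkey
    _ = ∏ i, ∫⁻ y, (if i = z then (s i).indicator (q1.rnDeriv q0)
          else (s i).indicator 1) y ∂q0 := by
        refine my_lintegral_pi _ _ fun i => ?_
        by_cases h : i = z <;>
          simp only [h, if_pos, if_neg, if_true, if_false] <;>
          exact Measurable.indicator (by first
            | exact Measure.measurable_rnDeriv _ _ | exact measurable_const) (hs _)
    _ = ∏ i, (if i = z then q1 else q0) (s i) := by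
        refine Finset.prod_congr rfl fun i _ => ?_
        by_cases h : i = z
        · subst h
          simp only [if_pos rfl, eq_self_iff_true, if_true]
          rw [lintegral_indicator (hs i)]
          exact Measure.setLIntegral_rnDeriv h10 _
        · simp only [if_neg h]
          rw [lintegral_indicator (hs i)]
          simp

theorem classMeasure_eq_withDensity' {X : Type*} [MeasurableSpace X]
    (q1 q0 : Measure X) [IsProbabilityMeasure q1] [IsProbabilityMeasure q0]
    (h10 : q1 ≪ q0) (K : ℕ) (z : Fin K) :
    classMeasure q1 q0 K z
      = (Measure.pi fun _ : Fin K => q0).withDensity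
          (fun x => ((q1.rnDeriv q0 (x z)).toNNReal : ℝ≥0∞)) := by
  rw [classMeasure_eq_withDensity q1 q0 h10 K z]
  refine withDensity_congr_ae ?_
  have h1 : ∀ᵐ y ∂q0, q1.rnDeriv q0 y < ∞ := q1.rnDeriv_lt_top q0
  have h2 : (Measure.pi fun _ : Fin K => q0)
      (Function.eval z ⁻¹' {y | ¬ q1.rnDeriv q0 y < ∞}) = 0 :=
    Measure.pi_eval_preimage_null _ (MeasureTheory.ae_iff.mp h1)
  have h3 : ∀ᵐ x ∂(Measure.pi fun _ : Fin K => q0), q1.rnDeriv q0 (x z) < ∞ := by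
    rw [MeasureTheory.ae_iff]; exact h2
  filter_upwards [h3] with x hx
  exact (ENNReal.coe_toNNReal hx.ne).symm

theorem meas_w {X : Type*} [MeasurableSpace X] (q1 q0 : Measure X) (K : ℕ) (z : Fin K) :
    Measurable (fun x : Fin K → X => (q1.rnDeriv q0 (x z)).toNNReal) :=
  (Measure.measurable_rnDeriv q1 q0).ennreal_toNNReal.comp (measurable_pi_apply z)

theorem integral_classMeasure {X : Type*} [MeasurableSpace X]
    (q1 q0 : Measure X) [IsProbabilityMeasure q1] [IsProbabilityMeasure q0]
    (h10 : q1 ≪ q0) (K : ℕ) (z : Fin K) (f : (Fin K → X) → ℝ) :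
    ∫ x, f x ∂classMeasure q1 q0 K z
      = ∫ x, (q1.rnDeriv q0 (x z)).toReal * f x ∂(Measure.pi fun _ : Fin K => q0) := by
  rw [classMeasure_eq_withDensity' q1 q0 h10 K z,
    integral_withDensity_eq_integral_smul (meas_w q1 q0 K z) f]
  simp [NNReal.smul_def, ENNReal.toReal]

theorem integrable_classMeasure {X : Type*} [MeasurableSpace X]
    (q1 q0 : Measure X) [IsProbabilityMeasure q1] [IsProbabilityMeasure q0]
    (h10 : q1 ≪ q0) (K : ℕ) (z : Fin K) {f : (Fin K → X) → ℝ}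
    (hf : Integrable f (classMeasure q1 q0 K z)) :
    Integrable (fun x => (q1.rnDeriv q0 (x z)).toReal * f x)
      (Measure.pi fun _ : Fin K => q0) := by
  rw [classMeasure_eq_withDensity' q1 q0 h10 K z] at hf
  have := (integrable_withDensity_iff_integrable_smul (meas_w q1 q0 K z)).mp hf
  simpa [NNReal.smul_def, ENNReal.toReal] using this

theorem clm_apply_eq_sum {K : ℕ} (L : (Fin K → ℝ) →L[ℝ] ℝ) (w : Fin K → ℝ) :
    L w = ∑ z, w z * L (Pi.single z 1) := by
  have hw : w = ∑ z, w z • (Pi.single z (1 : ℝ) : Fin K → ℝ) := by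
    funext i
    simp [Finset.sum_apply, Pi.single_apply, mul_ite]
  conv_lhs => rw [hw]
  rw [map_sum]
  simp [smul_eq_mul]

theorem key_alg {K : ℕ} (ν : ℝ) (hν : ν ≠ 0) (Ψ : (Fin K → ℝ) → ℝ) (u v : Fin K → ℝ) :
    ν * ((∑ z, v z * fderiv ℝ Ψ v (Pi.single z 1)) - Ψ v)
      + (∑ z, (ν * u z) * (- fderiv ℝ Ψ v (Pi.single z 1)))
      - (ν * ((∑ z, u z * fderiv ℝ Ψ u (Pi.single z 1)) - Ψ u)
        + (∑ z, (ν * u z) * (- fderiv ℝ Ψ u (Pi.single z 1))))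
      = ν * bregman Ψ u v := by
  unfold bregman
  rw [clm_apply_eq_sum (fderiv ℝ Ψ v) (u - v)]
  simp only [Pi.sub_apply, sub_mul]
  rw [Finset.sum_sub_distrib]
  have e1 : (∑ z, (ν * u z) * (- fderiv ℝ Ψ v (Pi.single z 1)))
      = -(ν * ∑ z, u z * fderiv ℝ Ψ v (Pi.single z 1)) := by
    rw [Finset.mul_sum, ← Finset.sum_neg_distrib]
    exact Finset.sum_congr rfl fun z _ => by ring
  have e2 : (∑ z, (ν * u z) * (- fderiv ℝ Ψ u (Pi.single z 1)))
      = -(ν * ∑ z, u z * fderiv ℝ Ψ u (Pi.single z 1)) := by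
    rw [Finset.mul_sum, ← Finset.sum_neg_distrib]
    exact Finset.sum_congr rfl fun z _ => by ring
  rw [e1, e2]
  ring

theorem rhoOf_etaR {X : Type*} {K : ℕ} (ν : ℝ) (hν : 0 < ν) (r : X → ℝ)
    (hr : ∀ y, 0 ≤ r y) (x : Fin K → X) :
    rhoOf K (etaR ν r x) = fun z => r (x z) / ν := by
  funext z
  have hS : 0 < ν + ∑ i, r (x i) :=
    add_pos_of_pos_of_nonneg hν (Finset.sum_nonneg fun i _ => hr _)
  simp only [rhoOf, etaR, Fin.cons_succ, Fin.cons_zero]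
  rw [div_div_div_cancel_right₀]
  exact hS.ne'

theorem pointwise_key {X : Type*} {K : ℕ} (ν : ℝ) (hν : 0 < ν)
    (Ψ : (Fin K → ℝ) → ℝ) (r s : X → ℝ) (hr : ∀ y, 0 ≤ r y) (hs : ∀ y, 0 ≤ s y)
    (x : Fin K → X) :
    ν * inducedRule K Ψ (etaR ν r x) 0
        + (∑ z, s (x z) * inducedRule K Ψ (etaR ν r x) z.succ)
        - (ν * inducedRule K Ψ (etaR ν s x) 0
          + ∑ z, s (x z) * inducedRule K Ψ (etaR ν s x) z.succ)
      = ν * bregman Ψ (fun i => s (x i) / ν) (fun i => r (x i) / ν) := by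
  have hρr : rhoOf K (etaR ν r x) = fun i => r (x i) / ν := rhoOf_etaR ν hν r hr x
  have hρs : rhoOf K (etaR ν s x) = fun i => s (x i) / ν := rhoOf_etaR ν hν s hs x
  simp only [inducedRule, Fin.cons_zero, Fin.cons_succ, hρr, hρs]
  have h1 : ∀ (z : Fin K) (c : ℝ), s (x z) * c = (ν * (s (x z) / ν)) * c := by
    intro z c; field_simp
  simp only [h1]
  exact key_alg ν hν.ne' Ψ (fun i => s (x i) / ν) (fun i => r (x i) / ν)

/-- for mutually absolutely continuous `q1, q0`, `K ≥ 1`, `ν > 0` and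
differentiable `Ψ`, the excess scoring-rule loss of `r` over `r* = dq1/dq0` equals
`(ν/(K+ν)) E_{q0^{⊗K}}[B_Ψ(r*(x_{1:K})/ν, r(x_{1:K})/ν)]`, provided all the expectations
defining the losses (for `r` and `r*`) are finite. -/
theorem scoreLoss_sub_scoreLoss_eq_bregman
    {X : Type*} [MeasurableSpace X] (q1 q0 : Measure X)
    [IsProbabilityMeasure q1] [IsProbabilityMeasure q0]
    (h10 : q1 ≪ q0) (h01 : q0 ≪ q1)
    (K : ℕ) (hK : 1 ≤ K) (ν : ℝ) (hν : 0 < ν)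
    (Ψ : (Fin K → ℝ) → ℝ)
    (hΨ : ∀ ρ : Fin K → ℝ, (∀ i, 0 < ρ i) → DifferentiableAt ℝ Ψ ρ)
    (r : X → ℝ) (hr_meas : Measurable r) (hr_pos : ∀ x, 0 < r x)
    (hI0 : Integrable (fun x : Fin K → X => inducedRule K Ψ (etaR ν r x) 0)
      (Measure.pi fun _ : Fin K => q0))
    (hIz : ∀ z : Fin K,
      Integrable (fun x : Fin K → X => inducedRule K Ψ (etaR ν r x) z.succ)
        (classMeasure q1 q0 K z))
    (hI0s : Integrable
      (fun x : Fin K → X =>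
        inducedRule K Ψ (etaR ν (fun y => (q1.rnDeriv q0 y).toReal) x) 0)
      (Measure.pi fun _ : Fin K => q0))
    (hIzs : ∀ z : Fin K,
      Integrable
        (fun x : Fin K → X =>
          inducedRule K Ψ (etaR ν (fun y => (q1.rnDeriv q0 y).toReal) x) z.succ)
        (classMeasure q1 q0 K z)) :
    scoreLoss q1 q0 K ν Ψ r
        - scoreLoss q1 q0 K ν Ψ (fun y => (q1.rnDeriv q0 y).toReal)
      = (ν / ((K : ℝ) + ν)) *
          ∫ x : Fin K → X,
            bregman Ψ (fun i => (q1.rnDeriv q0 (x i)).toReal / ν)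
              (fun i => r (x i) / ν)
            ∂(Measure.pi fun _ : Fin K => q0) := by

  classical
  set rs : X → ℝ := fun y => (q1.rnDeriv q0 y).toReal with hrs
  set μK : Measure (Fin K → X) := Measure.pi fun _ : Fin K => q0 with hμK
  have hint : ∀ (f : X → ℝ) (z : Fin K),
      ∫ x, inducedRule K Ψ (etaR ν f x) z.succ ∂classMeasure q1 q0 K z
        = ∫ x, (q1.rnDeriv q0 (x z)).toReal * inducedRule K Ψ (etaR ν f x) z.succ ∂μK :=
    fun f z => integral_classMeasure q1 q0 h10 K z _
  have hJr : ∀ z : Fin K, Integrable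
      (fun x => (q1.rnDeriv q0 (x z)).toReal * inducedRule K Ψ (etaR ν r x) z.succ) μK :=
    fun z => integrable_classMeasure q1 q0 h10 K z (hIz z)
  have hJs : ∀ z : Fin K, Integrable
      (fun x => (q1.rnDeriv q0 (x z)).toReal * inducedRule K Ψ (etaR ν rs x) z.succ) μK :=
    fun z => integrable_classMeasure q1 q0 h10 K z (hIzs z)
  have key : ν * (∫ x, inducedRule K Ψ (etaR ν r x) 0 ∂μK)
      + (∑ z : Fin K, ∫ x, (q1.rnDeriv q0 (x z)).toReal
          * inducedRule K Ψ (etaR ν r x) z.succ ∂μK)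
      - (ν * (∫ x, inducedRule K Ψ (etaR ν rs x) 0 ∂μK)
        + ∑ z : Fin K, ∫ x, (q1.rnDeriv q0 (x z)).toReal
          * inducedRule K Ψ (etaR ν rs x) z.succ ∂μK)
      = ν * ∫ x, bregman Ψ (fun i => (q1.rnDeriv q0 (x i)).toReal / ν)
          (fun i => r (x i) / ν) ∂μK := by
    have hir : Integrable (fun x => ∑ z : Fin K,
        (q1.rnDeriv q0 (x z)).toReal * inducedRule K Ψ (etaR ν r x) z.succ) μK :=
      integrable_finset_sum _ fun z _ => hJr z
    have his : Integrable (fun x => ∑ z : Fin K,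
        (q1.rnDeriv q0 (x z)).toReal * inducedRule K Ψ (etaR ν rs x) z.succ) μK :=
      integrable_finset_sum _ fun z _ => hJs z
    have h1 : Integrable (fun x => ν * inducedRule K Ψ (etaR ν r x) 0
        + ∑ z : Fin K, (q1.rnDeriv q0 (x z)).toReal
          * inducedRule K Ψ (etaR ν r x) z.succ) μK := (hI0.const_mul ν).add hir
    have h2 : Integrable (fun x => ν * inducedRule K Ψ (etaR ν rs x) 0
        + ∑ z : Fin K, (q1.rnDeriv q0 (x z)).toReal
          * inducedRule K Ψ (etaR ν rs x) z.succ) μK := (hI0s.const_mul ν).add his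
    calc ν * (∫ x, inducedRule K Ψ (etaR ν r x) 0 ∂μK)
          + (∑ z : Fin K, ∫ x, (q1.rnDeriv q0 (x z)).toReal
              * inducedRule K Ψ (etaR ν r x) z.succ ∂μK)
          - (ν * (∫ x, inducedRule K Ψ (etaR ν rs x) 0 ∂μK)
            + ∑ z : Fin K, ∫ x, (q1.rnDeriv q0 (x z)).toReal
              * inducedRule K Ψ (etaR ν rs x) z.succ ∂μK)
        = ∫ x, (ν * inducedRule K Ψ (etaR ν r x) 0
            + ∑ z : Fin K, (q1.rnDeriv q0 (x z)).toReal
              * inducedRule K Ψ (etaR ν r x) z.succ)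
          - (ν * inducedRule K Ψ (etaR ν rs x) 0
            + ∑ z : Fin K, (q1.rnDeriv q0 (x z)).toReal
              * inducedRule K Ψ (etaR ν rs x) z.succ) ∂μK := by
          rw [integral_sub h1 h2,
            integral_add (hI0.const_mul ν) hir, integral_add (hI0s.const_mul ν) his,
            integral_const_mul, integral_const_mul,
            integral_finset_sum _ (fun z _ => hJr z),
            integral_finset_sum _ (fun z _ => hJs z)]
      _ = ∫ x, ν * bregman Ψ (fun i => (q1.rnDeriv q0 (x i)).toReal / ν)
            (fun i => r (x i) / ν) ∂μK :=
          integral_congr_ae (Filter.Eventually.of_forall fun x =>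
            pointwise_key ν hν Ψ r rs (fun y => (hr_pos y).le)
              (fun y => ENNReal.toReal_nonneg) x)
      _ = ν * ∫ x, bregman Ψ (fun i => (q1.rnDeriv q0 (x i)).toReal / ν)
            (fun i => r (x i) / ν) ∂μK := integral_const_mul ν _
  simp only [scoreLoss, hint r, hint rs] at *
  linear_combination ((K : ℝ) + ν)⁻¹ * key
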